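/- Let E > 1 and define 𝒲(h) = W(E,h,u⁺(E,h)) for h > h₁(E), where W(E,h,u) = u²/2 - u³/3 - u/h + (1/(E*h²))*ln(1+E*h*u) and u⁺(E,h) is the larger root of (1-u)(1+Ehu) = E in (0,1). Then h ↦ 𝒲(h) is strictly increasing on (h₁(E), ∞), satisfies 𝒲(h) → 1/6 as h → +∞, and 𝒲 is negative at h = h₁(E); consequently there exists a unique h⁻(E) > h₁(E) with sign(𝒲(h)) = sign(h - h⁻(E)). -/

import Mathlib

/-!
Write `W(E,h,u) = potential E h u`; its `u`-derivative is the reaction term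
`u(1-u) - Eu/(1+Ehu)`, which vanishes at the root `u⁺(E,h)`. By the envelope principle
`𝒲'(h) = ∂ₕW(E,h,u⁺) = g(Ehu⁺)/(Eh³)` with `g(x) = x + x/(1+x) - 2 log(1+x)`, and
`g(x) = 2(sinh t - t) > 0` for `t = log(1+x)`. At `h = h₁` the discriminant vanishes, `u⁺` is a
double root and the reaction term is `-Eh₁u(u-u⁺)²/(1+Eh₁u) < 0` on `(0,u⁺)`, so
`𝒲(h₁) < W(E,h₁,0) = 0`. As `h → ∞`, `u⁺ → 1` and `W → 1/2 - 1/3`. Continuity and the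
intermediate value theorem then give the unique sign change `h⁻(E)`.
-/

open Filter Set Topology

theorem StrictMonoOn.existsUnique_sign_change {f : ℝ → ℝ} {a b : ℝ}
    (hf : StrictMonoOn f (Ioi a)) (hcont : ContinuousOn f (Icc a b)) (hab : a < b)
    (ha : f a < 0) (hb : 0 < f b) :
    ∃! c : ℝ, a < c ∧ ∀ x : ℝ, a < x →
      ((f x < 0 ↔ x < c) ∧ (f x = 0 ↔ x = c) ∧ (0 < f x ↔ c < x)) := by
  obtain ⟨c, ⟨hac, -⟩, hfc⟩ := intermediate_value_Icc hab.le hcont ⟨ha.le, hb.le⟩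
  have hac : a < c := hac.lt_of_ne (by rintro rfl; exact ha.ne hfc)
  refine ⟨c, ⟨hac, fun x hx => ?_⟩, fun d ⟨had, hd⟩ => ?_⟩
  · rw [← hfc]
    exact ⟨hf.lt_iff_lt hx hac, hf.eq_iff_eq hx hac, hf.lt_iff_lt hac hx⟩
  · exact ((hd c hac).2.1.1 hfc).symm

namespace Bistable

noncomputable section

def potential (E h u : ℝ) : ℝ :=
  u^2/2 - u^3/3 - u/h + (1/(E*h^2)) * Real.log (1 + E*h*u)

def reaction (E h u : ℝ) : ℝ := u * (1 - u) - E * u / (1 + E*h*u)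

def logDefect (x : ℝ) : ℝ := x + x / (1 + x) - 2 * Real.log (1 + x)

theorem logDefect_pos {x : ℝ} (hx : 0 < x) : 0 < logDefect x := by
  have h1x : 0 < 1 + x := by linarith
  have hsinh := Real.sinh_log h1x
  have hlt := Real.self_lt_sinh_iff.2 (Real.log_pos (by linarith : 1 < 1 + x))
  have : logDefect x = 2 * (Real.sinh (Real.log (1 + x)) - Real.log (1 + x)) := by
    rw [hsinh, logDefect]; field_simp; ring
  rw [this]; linarith

theorem reaction_eq {E h u : ℝ} (h1 : 1 + E*h*u ≠ 0) :
    reaction E h u = u * ((1 - u) * (1 + E*h*u) - E) / (1 + E*h*u) := by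
  rw [reaction, eq_div_iff h1, sub_mul, div_mul_cancel₀ _ h1]; ring

theorem hasDerivAt_potential {E h u : ℝ} (hE : E ≠ 0) (hh : h ≠ 0)
    (h1 : 1 + E*h*u ≠ 0) : HasDerivAt (potential E h) (reaction E h u) u := by
  have hlog : HasDerivAt (fun u => Real.log (1 + E*h*u)) (E*h / (1 + E*h*u)) u := by
    simpa using (((hasDerivAt_id u).const_mul (E*h)).const_add 1).log h1
  refine (((((hasDerivAt_pow 2 u).div_const 2).sub ((hasDerivAt_pow 3 u).div_const 3)).sub
    ((hasDerivAt_id u).div_const h)).add (hlog.const_mul (1/(E*h^2)))).congr_deriv ?_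
  rw [reaction]; ring_nf at h1 ⊢; field_simp; ring

theorem hasDerivAt_potential_comp {E : ℝ} {u : ℝ → ℝ} {u' h : ℝ} (hu : HasDerivAt u u' h)
    (hE : E ≠ 0) (hh : h ≠ 0) (h1 : 1 + E*h*u h ≠ 0) :
    HasDerivAt (fun h => potential E h (u h))
      (logDefect (E*h*u h) / (E*h^3) + reaction E h (u h) * u') h := by
  have hlog : HasDerivAt (fun h => Real.log (1 + E*h*u h))
      ((E*u h + E*h*u') / (1 + E*h*u h)) h := by
    simpa using ((((hasDerivAt_id h).const_mul E).mul hu).const_add 1).log h1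
  have hcoef := (hasDerivAt_const h (1:ℝ)).div ((hasDerivAt_pow 2 h).const_mul E) (by positivity)
  refine ((((hu.pow 2).div_const 2).sub ((hu.pow 3).div_const 3)).sub
    (hu.div (hasDerivAt_id h) hh) |>.add (hcoef.mul hlog)).congr_deriv ?_
  simp only [id, Pi.div_apply]; rw [logDefect, reaction]; ring_nf at h1 ⊢; field_simp; ring

theorem reaction_eq_zero_of_root {E h u : ℝ} (h1 : 1 + E*h*u ≠ 0)
    (hroot : (1 - u) * (1 + E*h*u) = E) : reaction E h u = 0 := by
  rw [reaction_eq h1, hroot, sub_self, mul_zero, zero_div]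

theorem potential_neg_of_reaction_neg {E h u₁ : ℝ} (hE : 0 < E) (hh : 0 < h) (hu₁ : 0 < u₁)
    (hneg : ∀ u ∈ Ioo 0 u₁, reaction E h u < 0) : potential E h u₁ < 0 := by
  have hderiv : ∀ u ∈ Icc 0 u₁, HasDerivAt (potential E h) (reaction E h u) u := fun u hu =>
    hasDerivAt_potential hE.ne' hh.ne' (by nlinarith [mul_pos hE hh, hu.1])
  have hanti : StrictAntiOn (potential E h) (Icc 0 u₁) :=
    strictAntiOn_of_hasDerivWithinAt_neg (convex_Icc 0 u₁)
      (fun u hu => (hderiv u hu).continuousAt.continuousWithinAt)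
      (fun u hu => (hderiv u (interior_subset hu)).hasDerivWithinAt)
      (fun u hu => hneg u (by rwa [interior_Icc] at hu))
  simpa [potential] using hanti (left_mem_Icc.2 hu₁.le) (right_mem_Icc.2 hu₁.le) hu₁

theorem tendsto_potential_atTop {E : ℝ} (hE : 0 < E) {u : ℝ → ℝ}
    (hu : Tendsto u atTop (𝓝 1)) : Tendsto (fun h => potential E h (u h)) atTop (𝓝 (1/6)) := by
  have hquot : Tendsto (fun h => u h / h) atTop (𝓝 0) := hu.div_atTop tendsto_id
  have hpos : ∀ᶠ h in atTop, 0 < E*h*u h :=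
    (eventually_gt_atTop 0).and (hu.eventually (eventually_gt_nhds one_pos)) |>.mono
      fun h ⟨hh, hu⟩ => by positivity
  have hlog : Tendsto (fun h => 1/(E*h^2) * Real.log (1 + E*h*u h)) atTop (𝓝 0) := by
    refine tendsto_of_tendsto_of_tendsto_of_le_of_le' tendsto_const_nhds hquot ?_ ?_
    · filter_upwards [hpos] with h hx
      have := Real.log_nonneg (by linarith : (1:ℝ) ≤ 1 + E*h*u h)
      positivity
    · filter_upwards [hpos, eventually_gt_atTop 0] with h hx hh
      calc 1/(E*h^2) * Real.log (1 + E*h*u h) ≤ 1/(E*h^2) * (E*h*u h) := by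
            gcongr; linarith [Real.log_le_sub_one_of_pos (by linarith : 0 < 1 + E*h*u h)]
        _ = u h / h := by field_simp
  have H := (((hu.pow 2).div_const 2).sub ((hu.pow 3).div_const 3)).sub hquot |>.add hlog
  rw [show (1:ℝ)^2/2 - 1^3/3 - 0 + 0 = 1/6 by norm_num] at H
  exact H

def disc (E h : ℝ) : ℝ := (1 - 1/(E*h))^2 - 4*(E-1)/(E*h)

def upperRoot (E h : ℝ) : ℝ := (1/2) * (1 - 1/(E*h) + √(disc E h))

def threshold (E : ℝ) : ℝ := (1/E) * (2*E - 1 + 2*√(E*(E-1)))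

theorem upperRoot_root {E h : ℝ} (hEh : E*h ≠ 0) (hd : 0 ≤ disc E h) :
    (1 - upperRoot E h) * (1 + E*h*upperRoot E h) = E := by
  have ha : E*h * (1/(E*h)) = 1 := mul_one_div_cancel hEh
  rw [disc, div_eq_mul_one_div (4*(E-1))] at hd
  rw [upperRoot, disc, div_eq_mul_one_div (4*(E-1))]
  generalize 1/(E*h) = a at ha hd ⊢
  have hs := Real.sq_sqrt hd
  generalize √((1 - a)^2 - 4*(E-1)*a) = s at hs ⊢
  linear_combination (-(E*h)/4) * hs + ((1/2)*(1 - a + s) + E - 1) * ha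

theorem differentiableAt_upperRoot {E h : ℝ} (hEh : E*h ≠ 0) (hd : 0 < disc E h) :
    DifferentiableAt ℝ (upperRoot E) h := by
  unfold upperRoot disc at *
  fun_prop (disch := first | assumption | exact hd.ne')

theorem continuousAt_potential_upperRoot {E h : ℝ} (hE : E ≠ 0) (hh : h ≠ 0)
    (h1 : 1 + E*h*upperRoot E h ≠ 0) :
    ContinuousAt (fun h => potential E h (upperRoot E h)) h := by
  unfold potential upperRoot disc at *
  fun_prop (disch := first | assumption | positivity)

theorem tendsto_upperRoot_atTop {E : ℝ} (hE : 0 < E) : Tendsto (upperRoot E) atTop (𝓝 1) := by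
  have h0 : Tendsto (fun h => 1/(E*h)) atTop (𝓝 0) :=
    (tendsto_id.const_mul_atTop hE).inv_tendsto_atTop.congr fun h => (one_div (E*h)).symm
  have hd : Tendsto (disc E) atTop (𝓝 1) := by
    have H := ((h0.const_sub 1).pow 2).sub (h0.const_mul (4*(E-1)))
    rw [sub_zero, one_pow, mul_zero, sub_zero] at H
    exact H.congr fun h => by rw [disc, div_eq_mul_one_div (4*(E-1))]
  have H := ((h0.const_sub 1).add hd.sqrt).const_mul (1/2:ℝ)
  rw [show (1/2:ℝ) * (1 - 0 + √1) = 1 by norm_num] at H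
  exact H

theorem disc_eq_mul {E : ℝ} (hE : 1 ≤ E) (h : ℝ) :
    disc E h = (2*E - 1 - 2*√(E*(E-1)) - 1/(E*h)) * (2*E - 1 + 2*√(E*(E-1)) - 1/(E*h)) := by
  have hr := Real.sq_sqrt (by nlinarith : 0 ≤ E*(E-1))
  rw [disc, div_eq_mul_one_div (4*(E-1))]
  linear_combination 4 * hr

theorem one_div_mul_threshold {E : ℝ} (hE : 1 < E) :
    1/(E * threshold E) = 2*E - 1 - 2*√(E*(E-1)) := by
  have hr := Real.sq_sqrt (by nlinarith : 0 ≤ E*(E-1))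
  have hpos : 0 < 2*E - 1 + 2*√(E*(E-1)) := by linarith [Real.sqrt_nonneg (E*(E-1))]
  rw [threshold, ← mul_assoc, mul_one_div_cancel (by positivity), one_mul, div_eq_iff hpos.ne']
  linear_combination 4 * hr

theorem threshold_pos {E : ℝ} (hE : 1 < E) : 0 < threshold E := by
  have : 0 < 2*E - 1 + 2*√(E*(E-1)) := by linarith [Real.sqrt_nonneg (E*(E-1))]
  unfold threshold; positivity

theorem one_div_mul_threshold_lt_one {E : ℝ} (hE : 1 < E) : 1/(E * threshold E) < 1 := by
  rw [one_div_mul_threshold hE]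
  nlinarith [Real.sq_sqrt (by nlinarith : 0 ≤ E*(E-1)), Real.sqrt_nonneg (E*(E-1))]

theorem disc_threshold {E : ℝ} (hE : 1 < E) : disc E (threshold E) = 0 := by
  rw [disc_eq_mul hE.le, one_div_mul_threshold hE, sub_self, zero_mul]

theorem disc_pos {E h : ℝ} (hE : 1 < E) (hh : threshold E < h) : 0 < disc E h := by
  have := threshold_pos hE
  have hlt : 1/(E*h) < 1/(E * threshold E) := by gcongr
  rw [one_div_mul_threshold hE] at hlt
  rw [disc_eq_mul hE.le]
  apply mul_pos <;> linarith [Real.sqrt_nonneg (E*(E-1))]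

theorem upperRoot_pos {E h : ℝ} (hE : 1 < E) (hh : threshold E ≤ h) : 0 < upperRoot E h := by
  have := threshold_pos hE
  have hle : 1/(E*h) ≤ 1/(E * threshold E) := by gcongr
  have := one_div_mul_threshold_lt_one hE
  have := Real.sqrt_nonneg (disc E h)
  unfold upperRoot; linarith

theorem reaction_threshold_neg {E u : ℝ} (hE : 1 < E)
    (hu : u ∈ Ioo 0 (upperRoot E (threshold E))) : reaction E (threshold E) u < 0 := by
  have hd := disc_threshold hE
  have hh₁ := threshold_pos hE
  set h₁ := threshold E
  set u₁ := upperRoot E h₁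
  have hk : 0 < E*h₁ := mul_pos (by linarith) hh₁
  have h1 : 0 < 1 + E*h₁*u := by nlinarith [hu.1]
  have hroot := upperRoot_root hk.ne' hd.ge
  have hdouble : 2*(E*h₁)*u₁ = E*h₁ - 1 := by
    simp only [u₁, upperRoot, hd, Real.sqrt_zero, add_zero]
    field_simp
  have hquad : (1 - u) * (1 + E*h₁*u) - E = -(E*h₁) * (u - u₁)^2 := by
    linear_combination hroot + (u₁ - u) * hdouble
  rw [reaction_eq h1.ne', hquad]
  have : 0 < E*h₁*u*(u - u₁)^2 :=
    mul_pos (mul_pos hk hu.1) (pow_two_pos_of_ne_zero (sub_ne_zero.2 hu.2.ne))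
  apply div_neg_of_neg_of_pos _ h1
  linarith

theorem potential_upperRoot_threshold_neg {E : ℝ} (hE : 1 < E) :
    potential E (threshold E) (upperRoot E (threshold E)) < 0 :=
  potential_neg_of_reaction_neg (by linarith) (threshold_pos hE) (upperRoot_pos hE le_rfl)
    fun _ hu => reaction_threshold_neg hE hu

theorem hasDerivAt_potential_upperRoot {E h : ℝ} (hE : 1 < E) (hh : threshold E < h) :
    HasDerivAt (fun h => potential E h (upperRoot E h))
      (logDefect (E*h*upperRoot E h) / (E*h^3)) h := by
  have hh0 : 0 < h := (threshold_pos hE).trans hh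
  have hEh : 0 < E*h := by positivity
  have h1 : 0 < 1 + E*h*upperRoot E h := by
    have := upperRoot_pos hE hh.le
    positivity
  have hroot := upperRoot_root hEh.ne' (disc_pos hE hh).le
  simpa [reaction_eq_zero_of_root h1.ne' hroot] using hasDerivAt_potential_comp
    (differentiableAt_upperRoot hEh.ne' (disc_pos hE hh)).hasDerivAt (by positivity) hh0.ne' h1.ne'

theorem strictMonoOn_potential_upperRoot {E : ℝ} (hE : 1 < E) :
    StrictMonoOn (fun h => potential E h (upperRoot E h)) (Ioi (threshold E)) := by
  refine strictMonoOn_of_hasDerivWithinAt_pos (convex_Ioi _)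
    (fun h hh => (hasDerivAt_potential_upperRoot hE hh).continuousAt.continuousWithinAt)
    (fun h hh => (hasDerivAt_potential_upperRoot hE (interior_subset hh)).hasDerivWithinAt)
    fun h hh => ?_
  rw [interior_Ioi] at hh
  have hh0 : 0 < h := (threshold_pos hE).trans hh
  have := upperRoot_pos hE hh.le
  exact div_pos (logDefect_pos (by positivity)) (by positivity)

theorem continuousOn_potential_upperRoot {E : ℝ} (hE : 1 < E) :
    ContinuousOn (fun h => potential E h (upperRoot E h)) (Ici (threshold E)) := by
  intro h hh
  have hh0 : 0 < h := (threshold_pos hE).trans_le hh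
  have := upperRoot_pos hE hh
  refine (continuousAt_potential_upperRoot (by positivity) hh0.ne' ?_).continuousWithinAt
  positivity

end

end Bistable

open Bistable in
theorem stmt_14 (E : ℝ) (hE : 1 < E)
    (h₁ : ℝ) (hh₁ : h₁ = (1/E) * (2*E - 1 + 2*Real.sqrt (E*(E-1))))
    (up : ℝ → ℝ)
    (hup : ∀ h : ℝ, up h =
      (1/2) * (1 - 1/(E*h) + Real.sqrt ((1 - 1/(E*h))^2 - 4*(E-1)/(E*h))))
    (W : ℝ → ℝ)
    (hW : ∀ h : ℝ, W h =
      (up h)^2/2 - (up h)^3/3 - (up h)/h + (1/(E*h^2)) * Real.log (1 + E*h*(up h))) :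
    StrictMonoOn W (Set.Ioi h₁) ∧
    Tendsto W atTop (nhds (1/6)) ∧
    W h₁ < 0 ∧
    ∃! hm : ℝ, h₁ < hm ∧ ∀ h : ℝ, h₁ < h →
      ((W h < 0 ↔ h < hm) ∧ (W h = 0 ↔ h = hm) ∧ (0 < W h ↔ hm < h)) := by
  obtain rfl : h₁ = threshold E := hh₁
  obtain rfl : up = upperRoot E := funext hup
  obtain rfl : W = fun h => potential E h (upperRoot E h) := funext hW
  have hmono := strictMonoOn_potential_upperRoot hE
  have hlim := tendsto_potential_atTop (by linarith) (tendsto_upperRoot_atTop (by linarith))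
  have hneg := potential_upperRoot_threshold_neg hE
  obtain ⟨b, hWb, hb⟩ := ((hlim.eventually (eventually_gt_nhds (by norm_num : (0:ℝ) < 1/6))).and
    (eventually_gt_atTop _)).exists
  exact ⟨hmono, hlim, hneg, hmono.existsUnique_sign_change
    ((continuousOn_potential_upperRoot hE).mono Icc_subset_Ici_self) hb hneg hWb⟩
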